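/- arXiv:2004.08847 — 2 statements merged into one kernel-verified Lean document; each statement's English description precedes it below -/
import Mathlib

section
/- Let OPT^i_{[i,j]} denote the minimum weight of a sink tree rooted at p_i on the point set P_{[i,j]} = {p_i < ... < p_j} on a line, with edge weights w(p,q) = |{z ∈ P_{[i,j]} \ {p} : |p−z| ≤ |p−q|}| (and symmetrically OPT^j_{[i,j]} for root p_j). Then for i < j, OPT^i_{[i,j]} = min over i ≤ k < j of (OPT^i_{[i,k]} + w(p_j, p_k) + OPT^j_{[k+1,j]}), and OPT^i_{[i,i]} = 0. (Here the weights inside subproblems are computed with respect to the full set P_{[i,j]}.) -/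
/-- Edge weight on the line: `w(p_a, p_b)` computed with respect to the point set
`P_{[lo,hi]} = {p_lo, …, p_hi}`. -/
noncomputable def lineWeight (p : ℕ → ℝ) (lo hi a b : ℕ) : ℕ :=
  ((Finset.Icc lo hi).filter (fun z => z ≠ a ∧ |p a - p z| ≤ |p a - p b|)).card

/-- `par` encodes a spanning sink tree rooted at `p_x` on the vertex set `P_{[a,b]}`. -/
def IsSinkTreeOn (a b x : ℕ) (par : ℕ → ℕ) : Prop :=
  par x = x ∧ (∀ k ∈ Finset.Icc a b, k ≠ x → par k ∈ Finset.Icc a b ∧ par k ≠ k) ∧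
    ∀ k ∈ Finset.Icc a b, ∃ m : ℕ, par^[m] k = x

/-- Total weight of the sink tree encoded by `par` on vertex set `P_{[a,b]}`, with edge
weights computed with respect to the ambient point set `P_{[lo,hi]}`. -/
noncomputable def sinkTreeWeight (p : ℕ → ℝ) (lo hi a b x : ℕ) (par : ℕ → ℕ) : ℕ :=
  ∑ k ∈ (Finset.Icc a b).erase x, lineWeight p lo hi k (par k)

/-- `OPT^x_{[a,b]}`: minimum weight of a sink tree rooted at `p_x` on the vertex set
`P_{[a,b]}`, edge weights w.r.t. the ambient set `P_{[lo,hi]}`. -/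
noncomputable def OPTsink (p : ℕ → ℝ) (lo hi a b x : ℕ) : ℕ :=
  sInf {W : ℕ | ∃ par : ℕ → ℕ, IsSinkTreeOn a b x par ∧ W = sinkTreeWeight p lo hi a b x par}


/-!
Gluing an optimal tree on `P_{[i,k]}` rooted at `p_i`, the edge `p_j → p_k` and an optimal tree
on `P_{[k+1,j]}` rooted at `p_j` gives a sink tree on `P_{[i,j]}`, so `OPT^i_{[i,j]}` is at most
the minimum. Conversely, redirecting an edge `v → par v` to a point `c` strictly between its
endpoints does not increase its weight (points on a line: `c` is closer to `v`) and shortens the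
total index span, and it keeps a tree as long as `c` does not descend from `v`. Hence some
optimal tree is *nested*: every point strictly inside the span of an edge descends from the
tail of that edge. In a nested tree the descendants of `p_j` are exactly `P_{[k+1,j]}` for
`k = par j`, so the tree splits at `k` into the two subproblems.
-/

open Finset Function

section Reaches

variable {α : Type*} {f g : α → α} {u v w r : α}

def Reaches (f : α → α) (u v : α) : Prop :=
  ∃ n, f^[n] u = v

theorem Reaches.refl (f : α → α) (u : α) : Reaches f u u :=
  ⟨0, rfl⟩

theorem reaches_apply (f : α → α) (u : α) : Reaches f u (f u) :=
  ⟨1, rfl⟩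

theorem Reaches.trans (huv : Reaches f u v) (hvw : Reaches f v w) : Reaches f u w := by
  obtain ⟨m, rfl⟩ := huv
  obtain ⟨n, rfl⟩ := hvw
  exact ⟨n + m, iterate_add_apply f n m u⟩

theorem Reaches.of_apply (h : Reaches f (f u) v) : Reaches f u v := by
  obtain ⟨n, hn⟩ := h
  exact ⟨n + 1, hn⟩

theorem Reaches.apply_of_ne (h : Reaches f u v) (huv : u ≠ v) : Reaches f (f u) v := by
  obtain ⟨_ | n, hn⟩ := h
  · exact absurd hn huv
  · exact ⟨n, hn⟩

theorem Reaches.eq_of_apply_eq_self (hr : f r = r) (h : Reaches f r v) : v = r := by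
  obtain ⟨n, rfl⟩ := h
  exact iterate_fixed hr n

/-- If `u ≠ v` reached each other, every point of the orbit of `u` would reach `u`; the orbit
contains the fixed point `r`, which reaches only itself. -/
theorem Reaches.antisymm (hr : f r = r) (hu : Reaches f u r) (huv : Reaches f u v)
    (hvu : Reaches f v u) : u = v := by
  by_contra hne
  have horbit : ∀ n, Reaches f (f^[n] u) u := by
    intro n
    induction n with
    | zero => exact .refl f u
    | succ n ih =>
      rw [iterate_succ_apply']
      by_cases h : f^[n] u = u
      · rw [h]
        exact (huv.apply_of_ne hne).trans hvu
      · exact ih.apply_of_ne h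
  obtain ⟨m, hm⟩ := hu
  obtain rfl : u = r := (hm ▸ horbit m).eq_of_apply_eq_self hr
  exact hne (huv.eq_of_apply_eq_self hr).symm

theorem Reaches.of_step {S : Set α} {t : α}
    (hstep : ∀ u ∈ S, u ≠ t → (g u = f u ∧ f u ∈ S) ∨ Reaches g u t)
    (h : Reaches f v t) (hv : v ∈ S) : Reaches g v t := by
  obtain ⟨n, hn⟩ := h
  induction n generalizing v with
  | zero => exact ⟨0, hn⟩
  | succ n ih =>
    by_cases hvt : v = t
    · exact hvt ▸ .refl g v
    rcases hstep v hv hvt with ⟨hgf, hfS⟩ | hg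
    · exact .of_apply (hgf ▸ ih hfS hn)
    · exact hg

end Reaches

theorem Finset.sum_apply_update_add {ι κ M : Type*} [DecidableEq ι] [AddCommMonoid M]
    {s : Finset ι} {v : ι} (hv : v ∈ s) (F : ι → κ → M) (par : ι → κ) (c : κ) :
    ∑ u ∈ s, F u (update par v c u) + F v (par v) = ∑ u ∈ s, F u (par u) + F v c := by
  simp only [apply_update F par v c]
  rw [sum_update_of_mem hv, sum_eq_sum_sdiff_singleton_add hv (fun u => F u (par u))]
  abel

theorem lineWeight_le_of_mem_uIcc {p : ℕ → ℝ} (hp : Monotone p) {lo hi a b c : ℕ}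
    (hc : c ∈ Set.uIcc a b) : lineWeight p lo hi a c ≤ lineWeight p lo hi a b := by
  have hpc : |p c - p a| ≤ |p b - p a| := Set.abs_sub_left_of_mem_uIcc (hp.mapsTo_uIcc hc)
  rw [abs_sub_comm (p c), abs_sub_comm (p b)] at hpc
  refine card_le_card fun z hz => ?_
  simp only [mem_filter] at hz ⊢
  exact ⟨hz.1, hz.2.1, hz.2.2.trans hpc⟩

section SinkTree

variable {p : ℕ → ℝ} {lo hi a b k x : ℕ} {par f g : ℕ → ℕ}

theorem isSinkTreeOn_const (hx : x ∈ Icc a b) : IsSinkTreeOn a b x (fun _ => x) :=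
  ⟨rfl, fun _ _ hkx => ⟨hx, Ne.symm hkx⟩, fun _ _ => ⟨1, rfl⟩⟩

theorem IsSinkTreeOn.reaches (h : IsSinkTreeOn a b x par) {v : ℕ} (hv : v ∈ Icc a b) :
    Reaches par v x :=
  h.2.2 v hv

theorem IsSinkTreeOn.apply_mem (h : IsSinkTreeOn a b x par) {v : ℕ} (hv : v ∈ Icc a b)
    (hvx : v ≠ x) : par v ∈ Icc a b :=
  (h.2.1 v hv hvx).1

theorem IsSinkTreeOn.apply_ne (h : IsSinkTreeOn a b x par) {v : ℕ} (hv : v ∈ Icc a b)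
    (hvx : v ≠ x) : par v ≠ v :=
  (h.2.1 v hv hvx).2

theorem sinkTreeWeight_congr (h : ∀ v ∈ (Icc a b).erase x, f v = g v) :
    sinkTreeWeight p lo hi a b x f = sinkTreeWeight p lo hi a b x g :=
  sum_congr rfl fun v hv => by rw [h v hv]

theorem sinkTreeWeight_split (p : ℕ → ℝ) (lo hi : ℕ) {i j k : ℕ} (hik : i ≤ k) (hkj : k < j)
    (par : ℕ → ℕ) :
    sinkTreeWeight p lo hi i j i par = sinkTreeWeight p lo hi i k i par
      + lineWeight p lo hi j (par j) + sinkTreeWeight p lo hi (k + 1) j j par := by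
  have hdisj : Disjoint ((Icc i k).erase i) (Icc (k + 1) j) := by
    rw [disjoint_left]
    intro z hz₁ hz₂
    simp only [mem_erase, mem_Icc] at hz₁ hz₂
    omega
  have hunion : (Icc i j).erase i = (Icc i k).erase i ∪ Icc (k + 1) j := by
    ext z
    simp only [mem_erase, mem_Icc, mem_union]
    omega
  have hj : j ∈ Icc (k + 1) j := mem_Icc.2 ⟨hkj, le_rfl⟩
  rw [sinkTreeWeight, hunion, sum_union hdisj, ← add_sum_erase _ _ hj, add_assoc]
  rfl

theorem OPTsink_le (h : IsSinkTreeOn a b x par) :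
    OPTsink p lo hi a b x ≤ sinkTreeWeight p lo hi a b x par :=
  Nat.sInf_le ⟨par, h, rfl⟩

theorem exists_OPTsink_eq (hx : x ∈ Icc a b) :
    ∃ par, IsSinkTreeOn a b x par ∧ OPTsink p lo hi a b x = sinkTreeWeight p lo hi a b x par :=
  Nat.sInf_mem (show {W | ∃ par, IsSinkTreeOn a b x par ∧ W = sinkTreeWeight p lo hi a b x par}
    |>.Nonempty from ⟨_, _, isSinkTreeOn_const hx, rfl⟩)

theorem OPTsink_self (p : ℕ → ℝ) (lo hi a : ℕ) : OPTsink p lo hi a a a = 0 :=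
  Nat.le_zero.1 <| (OPTsink_le (isSinkTreeOn_const (left_mem_Icc.2 le_rfl))).trans_eq <| by
    simp [sinkTreeWeight]

def sinkTreeGlue (k b : ℕ) (f g : ℕ → ℕ) (v : ℕ) : ℕ :=
  if v ≤ k then f v else if v = b then k else g v

theorem sinkTreeGlue_of_le {v : ℕ} (hv : v ≤ k) : sinkTreeGlue k b f g v = f v :=
  if_pos hv

theorem sinkTreeGlue_self (hkb : k < b) : sinkTreeGlue k b f g b = k := by
  rw [sinkTreeGlue, if_neg (by omega), if_pos rfl]

theorem sinkTreeGlue_of_lt_of_ne {v : ℕ} (hkv : k < v) (hvb : v ≠ b) :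
    sinkTreeGlue k b f g v = g v := by
  rw [sinkTreeGlue, if_neg (by omega), if_neg hvb]

theorem IsSinkTreeOn.glue (hf : IsSinkTreeOn a k a f) (hg : IsSinkTreeOn (k + 1) b b g)
    (hak : a ≤ k) (hkb : k < b) : IsSinkTreeOn a b a (sinkTreeGlue k b f g) := by
  have hleft : ∀ v ∈ Icc a k, Reaches (sinkTreeGlue k b f g) v a := fun v hv =>
    (hf.reaches hv).of_step (S := ↑(Icc a k)) (fun u hu hua =>
      .inl ⟨sinkTreeGlue_of_le (mem_Icc.1 hu).2, hf.apply_mem hu hua⟩) hv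
  refine ⟨(sinkTreeGlue_of_le hak).trans hf.1, fun v hv hva => ?_, fun v hv => ?_⟩
  · have hv' := mem_Icc.1 hv
    by_cases hvk : v ≤ k
    · have hvk' : v ∈ Icc a k := mem_Icc.2 ⟨hv'.1, hvk⟩
      rw [sinkTreeGlue_of_le hvk]
      exact ⟨Icc_subset_Icc_right hkb.le (hf.apply_mem hvk' hva), hf.apply_ne hvk' hva⟩
    by_cases hvb : v = b
    · rw [hvb, sinkTreeGlue_self hkb]
      exact ⟨mem_Icc.2 ⟨hak, hkb.le⟩, hkb.ne⟩
    · have hvk' : v ∈ Icc (k + 1) b := mem_Icc.2 ⟨by omega, hv'.2⟩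
      rw [sinkTreeGlue_of_lt_of_ne (by omega) hvb]
      exact ⟨Icc_subset_Icc_left (by omega) (hg.apply_mem hvk' hvb), hg.apply_ne hvk' hvb⟩
  by_cases hvk : v ≤ k
  · exact hleft v (mem_Icc.2 ⟨(mem_Icc.1 hv).1, hvk⟩)
  have hvb : Reaches (sinkTreeGlue k b f g) v b :=
    (hg.reaches (mem_Icc.2 ⟨by omega, (mem_Icc.1 hv).2⟩)).of_step (S := ↑(Icc (k + 1) b))
      (fun u hu hub => .inl ⟨sinkTreeGlue_of_lt_of_ne (mem_Icc.1 hu).1 hub, hg.apply_mem hu hub⟩)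
      (mem_Icc.2 ⟨by omega, (mem_Icc.1 hv).2⟩)
  have hbk : Reaches (sinkTreeGlue k b f g) b k := by
    simpa only [sinkTreeGlue_self hkb] using reaches_apply (sinkTreeGlue k b f g) b
  exact hvb.trans (hbk.trans (hleft k (mem_Icc.2 ⟨hak, le_rfl⟩)))

theorem sinkTreeWeight_glue (p : ℕ → ℝ) (lo hi : ℕ) {i j k : ℕ} (hik : i ≤ k) (hkj : k < j)
    (f g : ℕ → ℕ) :
    sinkTreeWeight p lo hi i j i (sinkTreeGlue k j f g) = sinkTreeWeight p lo hi i k i f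
      + lineWeight p lo hi j k + sinkTreeWeight p lo hi (k + 1) j j g := by
  have hleft : sinkTreeWeight p lo hi i k i (sinkTreeGlue k j f g)
      = sinkTreeWeight p lo hi i k i f :=
    sinkTreeWeight_congr fun v hv => sinkTreeGlue_of_le (mem_Icc.1 (mem_of_mem_erase hv)).2
  have hright : sinkTreeWeight p lo hi (k + 1) j j (sinkTreeGlue k j f g)
      = sinkTreeWeight p lo hi (k + 1) j j g :=
    sinkTreeWeight_congr fun v hv =>
      sinkTreeGlue_of_lt_of_ne (mem_Icc.1 (mem_of_mem_erase hv)).1 (ne_of_mem_erase hv)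
  rw [sinkTreeWeight_split p lo hi hik hkj, sinkTreeGlue_self hkj, hleft, hright]

theorem OPTsink_le_add (p : ℕ → ℝ) (lo hi : ℕ) {i j k : ℕ} (hik : i ≤ k) (hkj : k < j) :
    OPTsink p lo hi i j i
      ≤ OPTsink p lo hi i k i + lineWeight p lo hi j k + OPTsink p lo hi (k + 1) j j := by
  obtain ⟨f, hf, hfw⟩ := exists_OPTsink_eq (p := p) (lo := lo) (hi := hi) (left_mem_Icc.2 hik)
  obtain ⟨g, hg, hgw⟩ := exists_OPTsink_eq (p := p) (lo := lo) (hi := hi)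
    (right_mem_Icc.2 (Nat.succ_le_of_lt hkj))
  rw [hfw, hgw, ← sinkTreeWeight_glue p lo hi hik hkj]
  exact OPTsink_le (hf.glue hg hik hkj)

def IsNested (a b x : ℕ) (par : ℕ → ℕ) : Prop :=
  ∀ v ∈ (Icc a b).erase x, ∀ c, min v (par v) < c → c < max v (par v) → Reaches par c v

def totalSpan (a b x : ℕ) (par : ℕ → ℕ) : ℕ :=
  ∑ v ∈ (Icc a b).erase x, Nat.dist v (par v)

theorem IsSinkTreeOn.update_of_not_reaches (ht : IsSinkTreeOn a b x par) {v c : ℕ}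
    (hv : v ∈ (Icc a b).erase x) (hc : c ∈ Icc a b) (hcv : ¬Reaches par c v) :
    IsSinkTreeOn a b x (update par v c) := by
  obtain ⟨hvx, hv⟩ := mem_erase.1 hv
  have hcv' : c ≠ v := fun h => hcv (h ▸ .refl par c)
  have hc_reach : Reaches (update par v c) c x :=
    (ht.reaches hc).of_step (S := {u | ¬Reaches par u v}) (fun u hu _ =>
      .inl ⟨update_of_ne (fun h => hu (by rw [h]; exact .refl par v)) c par,
        fun h => hu h.of_apply⟩) hcv
  have hv_reach : Reaches (update par v c) v x := .of_apply (by rwa [update_self])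
  refine ⟨by rw [update_of_ne (Ne.symm hvx)]; exact ht.1, fun u hu hux => ?_, fun u hu =>
    (ht.reaches hu).of_step (S := Set.univ) (fun w _ _ => ?_) trivial⟩
  · by_cases huv : u = v
    · subst huv
      rw [update_self]
      exact ⟨hc, hcv'⟩
    · rw [update_of_ne huv]
      exact ⟨ht.apply_mem hu hux, ht.apply_ne hu hux⟩
  · by_cases hwv : w = v
    · exact .inr (hwv ▸ hv_reach)
    · exact .inl ⟨update_of_ne hwv c par, trivial⟩

/-- A tree of minimal total span among those of weight at most that of `par` is nested, since
`update_of_not_reaches` would shorten it. -/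
theorem IsSinkTreeOn.exists_isNested (lo hi : ℕ) (hp : Monotone p) (ht : IsSinkTreeOn a b x par) :
    ∃ q, IsSinkTreeOn a b x q ∧ IsNested a b x q ∧
      sinkTreeWeight p lo hi a b x q ≤ sinkTreeWeight p lo hi a b x par := by
  induction hn : totalSpan a b x par using Nat.strong_induction_on generalizing par with
  | _ n ih =>
  by_cases hnest : IsNested a b x par
  · exact ⟨par, ht, hnest, le_rfl⟩
  simp only [IsNested, not_forall] at hnest
  obtain ⟨v, hv, c, hc₁, hc₂, hcv⟩ := hnest
  have hpv := ht.apply_mem (mem_of_mem_erase hv) (ne_of_mem_erase hv)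
  have hc : c ∈ Icc a b := by
    simp only [mem_erase, mem_Icc] at hv hpv ⊢
    omega
  have hspan : Nat.dist v c < Nat.dist v (par v) := by
    simp only [Nat.dist]
    omega
  have hspan_lt : totalSpan a b x (update par v c) < totalSpan a b x par := by
    have := sum_apply_update_add hv (fun u w => Nat.dist u w) par c
    simp only [totalSpan] at this ⊢
    omega
  have hweight : lineWeight p lo hi v c ≤ lineWeight p lo hi v (par v) :=
    lineWeight_le_of_mem_uIcc hp (Set.mem_uIcc.2 (by omega))
  have hweight_le : sinkTreeWeight p lo hi a b x (update par v c)
      ≤ sinkTreeWeight p lo hi a b x par := by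
    have := sum_apply_update_add hv (fun u w => lineWeight p lo hi u w) par c
    simp only [sinkTreeWeight] at this ⊢
    omega
  obtain ⟨q, hq, hqn, hqw⟩ := ih _ (hn ▸ hspan_lt) (ht.update_of_not_reaches hv hc hcv) rfl
  exact ⟨q, hq, hqn, hqw.trans hweight_le⟩

theorem IsNested.reaches_of_apply_lt_of_lt {i j : ℕ} (hn : IsNested i j i par) (hij : i < j)
    {v : ℕ} (hkv : par j < v) (hvj : v < j) : Reaches par v j :=
  hn j (mem_erase.2 ⟨hij.ne', right_mem_Icc.2 hij.le⟩) v (by omega) (by omega)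

/-- An edge from `[i, par j]` leaving it would close the cycle `v ⇝ j → par j ⇝ v`. -/
theorem IsNested.apply_le_of_le {i j : ℕ} (ht : IsSinkTreeOn i j i par)
    (hn : IsNested i j i par) (hij : i < j) {v : ℕ} (hv : v ∈ Icc i (par j)) (hvi : v ≠ i) :
    par v ≤ par j := by
  have hk := mem_Icc.1 (ht.apply_mem (right_mem_Icc.2 hij.le) hij.ne')
  have hv' := mem_Icc.1 hv
  have hvmem : v ∈ Icc i j := mem_Icc.2 ⟨hv'.1, by omega⟩
  have hpv := mem_Icc.1 (ht.apply_mem hvmem hvi)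
  by_contra! hkpv
  have hvj : Reaches par v j := by
    rcases hpv.2.eq_or_lt with heq | hlt
    · rw [← heq]
      exact reaches_apply par v
    · exact (hn.reaches_of_apply_lt_of_lt hij hkpv hlt).of_apply
  have hjv : Reaches par j v := by
    rcases hv'.2.eq_or_lt with heq | hlt
    · rw [heq]
      exact reaches_apply par j
    · exact (reaches_apply par j).trans
        (hn v (mem_erase.2 ⟨hvi, hvmem⟩) (par j) (by omega) (by omega))
  have := Reaches.antisymm ht.1 (ht.reaches hvmem) hvj hjv
  omega

/-- An edge from `(par j, j)` leaving it would close a cycle through `j` and `par j`. -/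
theorem IsNested.lt_apply_of_lt {i j : ℕ} (ht : IsSinkTreeOn i j i par)
    (hn : IsNested i j i par) (hij : i < j) {v : ℕ} (hkv : par j < v) (hvj : v < j) :
    par j < par v := by
  have hkmem := ht.apply_mem (right_mem_Icc.2 hij.le) hij.ne'
  have hk := mem_Icc.1 hkmem
  have hvmem : v ∈ Icc i j := mem_Icc.2 ⟨by omega, hvj.le⟩
  have hvi : v ≠ i := by omega
  have hvj' := hn.reaches_of_apply_lt_of_lt hij hkv hvj
  have hpv := mem_Icc.1 (ht.apply_mem hvmem hvi)
  by_contra! hpvk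
  rcases hpvk.eq_or_lt with heq | hlt
  · have hkj : Reaches par (par j) j := heq ▸ hvj'.apply_of_ne hvj.ne
    exact ht.apply_ne (right_mem_Icc.2 hij.le) hij.ne'
      (Reaches.antisymm ht.1 (ht.reaches hkmem) hkj (reaches_apply par j))
  · have := Reaches.antisymm ht.1 (ht.reaches hvmem) hvj' ((reaches_apply par j).trans
      (hn v (mem_erase.2 ⟨hvi, hvmem⟩) (par j) (by omega) (by omega)))
    omega

theorem IsNested.isSinkTreeOn_left {i j : ℕ} (ht : IsSinkTreeOn i j i par)
    (hn : IsNested i j i par) (hij : i < j) : IsSinkTreeOn i (par j) i par := by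
  have hkj := (mem_Icc.1 (ht.apply_mem (right_mem_Icc.2 hij.le) hij.ne')).2
  have hsub : Icc i (par j) ⊆ Icc i j := Icc_subset_Icc_right hkj
  refine ⟨ht.1, fun v hv hvi => ⟨?_, ht.apply_ne (hsub hv) hvi⟩, fun v hv => ht.reaches (hsub hv)⟩
  exact mem_Icc.2 ⟨(mem_Icc.1 (ht.apply_mem (hsub hv) hvi)).1, hn.apply_le_of_le ht hij hv hvi⟩

theorem IsNested.isSinkTreeOn_right {i j : ℕ} (ht : IsSinkTreeOn i j i par)
    (hn : IsNested i j i par) (hij : i < j) : IsSinkTreeOn (par j + 1) j j (update par j j) := by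
  have hk := mem_Icc.1 (ht.apply_mem (right_mem_Icc.2 hij.le) hij.ne')
  have hsub : Icc (par j + 1) j ⊆ Icc i j := Icc_subset_Icc_left (by omega)
  have hstep : ∀ v ∈ Icc (par j + 1) j, v ≠ j → par v ∈ Icc (par j + 1) j := fun v hv hvj =>
    have hv' := mem_Icc.1 hv
    mem_Icc.2 ⟨hn.lt_apply_of_lt ht hij hv'.1 (by omega),
      (mem_Icc.1 (ht.apply_mem (hsub hv) (by omega))).2⟩
  refine ⟨update_self j j par, fun v hv hvj => ?_, fun v hv => ?_⟩
  · rw [update_of_ne hvj]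
    exact ⟨hstep v hv hvj, ht.apply_ne (hsub hv) (by have := (mem_Icc.1 hv).1; omega)⟩
  · have hvj : Reaches par v j := by
      rcases (mem_Icc.1 hv).2.eq_or_lt with heq | hlt
      · exact heq ▸ .refl par v
      · exact hn.reaches_of_apply_lt_of_lt hij (mem_Icc.1 hv).1 hlt
    exact hvj.of_step (S := ↑(Icc (par j + 1) j))
      (fun u hu huj => .inl ⟨update_of_ne huj j par, hstep u hu huj⟩) hv

theorem exists_add_le_OPTsink (lo hi : ℕ) (hp : Monotone p) {i j : ℕ} (hij : i < j) :
    ∃ k ∈ Ico i j,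
      OPTsink p lo hi i k i + lineWeight p lo hi j k + OPTsink p lo hi (k + 1) j j
        ≤ OPTsink p lo hi i j i := by
  obtain ⟨par₀, ht₀, hopt⟩ := exists_OPTsink_eq (p := p) (lo := lo) (hi := hi)
    (left_mem_Icc.2 hij.le)
  obtain ⟨par, ht, hn, hw⟩ := ht₀.exists_isNested lo hi hp
  have hjmem := right_mem_Icc.2 hij.le
  have hk' := mem_Icc.1 (ht.apply_mem hjmem hij.ne')
  have hkj := ht.apply_ne hjmem hij.ne'
  refine ⟨par j, mem_Ico.2 ⟨hk'.1, by omega⟩, ?_⟩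
  have hright : sinkTreeWeight p lo hi (par j + 1) j j (update par j j)
      = sinkTreeWeight p lo hi (par j + 1) j j par :=
    sinkTreeWeight_congr fun v hv => update_of_ne (ne_of_mem_erase hv) j par
  calc _ ≤ sinkTreeWeight p lo hi i (par j) i par + lineWeight p lo hi j (par j)
        + sinkTreeWeight p lo hi (par j + 1) j j (update par j j) :=
        add_le_add (add_le_add (OPTsink_le (hn.isSinkTreeOn_left ht hij)) le_rfl)
          (OPTsink_le (hn.isSinkTreeOn_right ht hij))
    _ = sinkTreeWeight p lo hi i j i par := by
        rw [hright, ← sinkTreeWeight_split p lo hi hk'.1 (by omega)]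
    _ ≤ _ := hw.trans hopt.ge

end SinkTree

/-- the recurrence for `OPT^i_{[i,j]}`: the base case `OPT^i_{[i,i]} = 0`
and, for `i < j`,
`OPT^i_{[i,j]} = min_{i ≤ k < j} (OPT^i_{[i,k]} + w(p_j,p_k) + OPT^j_{[k+1,j]})`,
where all weights are computed with respect to the full set `P_{[i,j]}`. -/
theorem OPTsink_recurrence (p : ℕ → ℝ) (hp : StrictMono p) (i j : ℕ) (hij : i < j) :
    (∀ a : ℕ, OPTsink p i j a a a = 0) ∧
    OPTsink p i j i j i
      = (Finset.Ico i j).inf' (Finset.nonempty_Ico.mpr hij)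
          (fun k => OPTsink p i j i k i + lineWeight p i j j k + OPTsink p i j (k + 1) j j) := by
  refine ⟨OPTsink_self p i j, le_antisymm ?_ ?_⟩
  · exact le_inf' _ _ fun k hk => OPTsink_le_add p i j (mem_Ico.1 hk).1 (mem_Ico.1 hk).2
  · obtain ⟨k, hk, hle⟩ := exists_add_le_OPTsink i j hp.monotone hij
    exact (inf'_le _ hk).trans hle
end

section
/- Let P = {p_1 < ... < p_n} be real numbers and consider intervals [i,j] with i ≤ j. Define the values S←[i,j] and S→[i,j] by the recurrences S←[i,i] = S→[i,i] = 0, S←[i,j] = min_{i ≤ k < j} (S←[i,k] + w(p_j,p_k) + S→[k+1,j]) and S→[i,j] = min_{i < k ≤ j} (S←[i,k−1] + w(p_i,p_k) + S→[k,j]), where w is computed over all of P. Then S←[i,j] ≤ OPT^i_{[i,j]} and S→[i,j] ≤ OPT^j_{[i,j]}: each recurrence value is achieved by the weight of some sink tree on P_{[i,j]} rooted at p_i (resp. p_j). -/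
open Finset Function

namespace Function

variable {α : Type*} {f g : α → α}

theorem holds_of_holds_iterate {S : Set α} {P : α → Prop}
    (h : ∀ u ∈ S, ¬ P u → f u ∈ S ∧ (P (f u) → P u)) :
    ∀ (m : ℕ) {v : α}, v ∈ S → P (f^[m] v) → P v := by
  intro m
  induction m with
  | zero => exact fun _ hm => hm
  | succ m ih =>
    intro v hv hm
    by_contra hP
    obtain ⟨hfv, hback⟩ := h v hv hP
    exact hP (hback (ih hfv hm))

theorem iterate_apply_eq_of_eq_on_orbit {v : α} (h : ∀ r, f (g^[r] v) = g (g^[r] v)) :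
    ∀ m, f^[m] v = g^[m] v
  | 0 => rfl
  | m + 1 => by
    rw [iterate_succ_apply', iterate_succ_apply', iterate_apply_eq_of_eq_on_orbit h m, h]

theorem iterate_update_apply_of_forall_ne [DecidableEq α] {v s t : α}
    (h : ∀ r, f^[r] t ≠ v) (m : ℕ) : (update f v s)^[m] t = f^[m] t :=
  iterate_apply_eq_of_eq_on_orbit (fun r => update_of_ne (h r) _ _) m

theorem eq_of_mem_periodicPts_of_iterate_eq {x v : α} (hx : IsFixedPt f x)
    (hv : v ∈ periodicPts f) {b : ℕ} (h : f^[b] v = x) : v = x := by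
  have hv1 : minimalPeriod f v = 1 := by
    rw [← minimalPeriod_apply_iterate hv b, h, minimalPeriod_eq_one_iff_isFixedPt.2 hx]
  rw [← h, iterate_fixed (minimalPeriod_eq_one_iff_isFixedPt.1 hv1)]

theorem exists_iterate_eq_of_mapsTo_off {S : Set α} {e v : α}
    (hS : ∀ u ∈ S, u ≠ e → f u ∈ S) (hv : v ∈ S) {m : ℕ} (hm : f^[m] v ∉ S) :
    ∃ s, f^[s] v = e := by
  refine (holds_of_holds_iterate (P := fun u => (∃ s, f^[s] u = e) ∨ u ∉ S) ?_ m hv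
    (Or.inr hm)).resolve_right (not_not.2 hv)
  rintro u hu hP
  have hue : u ≠ e := fun h => hP (Or.inl ⟨0, h⟩)
  refine ⟨hS u hu hue, ?_⟩
  rintro (⟨s, hs⟩ | hfu)
  · exact Or.inl ⟨s + 1, hs⟩
  · exact absurd (hS u hu hue) hfu

end Function

-- The identity above `N` makes this an involution of all of `ℕ`.
def reflect (N v : ℕ) : ℕ := if v ≤ N then N - v else v

theorem reflect_of_le {N v : ℕ} (h : v ≤ N) : reflect N v = N - v := if_pos h

theorem reflect_involutive (N : ℕ) : Involutive (reflect N) := by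
  intro v
  unfold reflect
  split_ifs <;> omega

theorem reflect_mem_Icc {N a b a' b' v : ℕ} (ha : a' + b = N) (hb : b' + a = N)
    (hv : v ∈ Icc a b) : reflect N v ∈ Icc a' b' := by
  rw [mem_Icc] at hv ⊢
  rw [reflect_of_le (by omega)]
  omega

def treeWeight (W : ℕ → ℕ → ℕ) (a b x : ℕ) (par : ℕ → ℕ) : ℕ :=
  ∑ v ∈ (Icc a b).erase x, W v (par v)

def treeWeights (W : ℕ → ℕ → ℕ) (a b x : ℕ) : Set ℕ :=
  {w | ∃ par, IsSinkTreeOn a b x par ∧ w = treeWeight W a b x par}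

-- The only property of `w` the recurrences rely on: moving the head of an edge towards its
-- tail does not increase its weight.
def BetweenMonotoneOn (W : ℕ → ℕ → ℕ) (i j : ℕ) : Prop :=
  ∀ a ∈ Icc i j, ∀ b ∈ Icc i j, ∀ c, a ≤ c ∧ c ≤ b ∨ b ≤ c ∧ c ≤ a → W a c ≤ W a b

theorem lineWeight_betweenMonotoneOn {p : ℕ → ℝ} (hp : Monotone p) (lo hi i j : ℕ) :
    BetweenMonotoneOn (lineWeight p lo hi) i j := by
  intro a _ b _ c hc
  have hdist : |p a - p c| ≤ |p a - p b| := by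
    rcases hc with ⟨hac, hcb⟩ | ⟨hbc, hca⟩
    · have := hp hac; have := hp hcb
      rw [abs_of_nonpos (by linarith), abs_of_nonpos (by linarith)]; linarith
    · have := hp hbc; have := hp hca
      rw [abs_of_nonneg (by linarith), abs_of_nonneg (by linarith)]; linarith
  exact card_le_card fun z hz => by
    simp only [mem_filter] at hz ⊢
    exact ⟨hz.1, hz.2.1, hz.2.2.trans hdist⟩

theorem BetweenMonotoneOn.reflect {W : ℕ → ℕ → ℕ} {N a b a' b' : ℕ}
    (hW : BetweenMonotoneOn W a b) (ha : a' + b = N) (hb : b' + a = N) :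
    BetweenMonotoneOn (fun u v => W (reflect N u) (reflect N v)) a' b' := by
  intro u hu v hv c hc
  have hu' := hu; have hv' := hv
  rw [mem_Icc] at hu' hv'
  refine hW _ (reflect_mem_Icc (by omega) (by omega) hu) _
    (reflect_mem_Icc (by omega) (by omega) hv) _ ?_
  rw [reflect_of_le (by omega), reflect_of_le (by omega), reflect_of_le (by omega)]
  omega

namespace IsSinkTreeOn

variable {a b x : ℕ} {par : ℕ → ℕ}

theorem mapsTo (h : IsSinkTreeOn a b x par) (hx : x ∈ Icc a b) :
    Set.MapsTo par (Icc a b : Set ℕ) (Icc a b) := by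
  intro v hv
  by_cases hvx : v = x
  · rw [hvx, h.1]; exact hx
  · exact (h.2.1 v hv hvx).1

theorem notMem_periodicPts (h : IsSinkTreeOn a b x par) {v : ℕ} (hv : v ∈ Icc a b)
    (hvx : v ≠ x) : v ∉ periodicPts par := fun hper =>
  hvx <| eq_of_mem_periodicPts_of_iterate_eq h.1 hper (h.2.2 v hv).choose_spec

theorem reaches_of_agree (h : IsSinkTreeOn a b x par) {g : ℕ → ℕ} {y : ℕ}
    (hagree : ∀ u ∈ Icc a b, u ≠ x → g u = par u ∨ ∃ m, g^[m] u = y)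
    (hxy : ∃ m, g^[m] x = y) {v : ℕ} (hv : v ∈ Icc a b) : ∃ m, g^[m] v = y := by
  obtain ⟨M, hM⟩ := h.2.2 v hv
  refine holds_of_holds_iterate (S := (Icc a b : Set ℕ))
    (P := fun u => ∃ m, g^[m] u = y) ?_ M hv (by rwa [hM])
  intro u hu hP
  have hux : u ≠ x := by rintro rfl; exact hP hxy
  refine ⟨(h.2.1 u hu hux).1, fun ⟨m, hm⟩ => ?_⟩
  rcases hagree u hu hux with hgu | hreach
  · exact ⟨m + 1, by rwa [iterate_succ_apply, hgu]⟩
  · exact hreach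

theorem update (h : IsSinkTreeOn a b x par) {v t : ℕ} (hv : v ∈ Icc a b) (hvx : v ≠ x)
    (ht : t ∈ Icc a b) (htv : ∀ m, par^[m] t ≠ v) :
    IsSinkTreeOn a b x (update par v t) := by
  refine ⟨by rw [update_of_ne hvx.symm, h.1], fun u hu hux => ?_, fun u hu => ?_⟩
  · by_cases huv : u = v
    · subst huv
      rw [update_self]
      exact ⟨ht, fun e => htv 0 e⟩
    · rw [update_of_ne huv]
      exact h.2.1 u hu hux
  · refine h.reaches_of_agree (fun u _ _ => ?_) ⟨0, by rw [iterate_zero_apply]⟩ hu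
    by_cases huv : u = v
    · obtain ⟨Mt, hMt⟩ := h.2.2 t ht
      subst huv
      exact Or.inr ⟨Mt + 1, by rw [iterate_succ_apply, update_self,
        iterate_update_apply_of_forall_ne htv, hMt]⟩
    · exact Or.inl (update_of_ne huv _ _)

theorem reflect (h : IsSinkTreeOn a b x par) {N a' b' x' : ℕ} (ha : a' + b = N)
    (hb : b' + a = N) (hx : x' + x = N) :
    IsSinkTreeOn a' b' x' (_root_.reflect N ∘ par ∘ _root_.reflect N) := by
  have hσ := reflect_involutive N
  have hx' : _root_.reflect N x' = x := by rw [reflect_of_le (by omega)]; omega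
  have hxN : _root_.reflect N x = x' := by rw [← hx', hσ]
  have hsemi : Semiconj (_root_.reflect N) par (_root_.reflect N ∘ par ∘ _root_.reflect N) :=
    fun v => by simp only [comp_apply, hσ v]
  have hσmem : ∀ v ∈ Icc a' b', _root_.reflect N v ∈ Icc a b := fun v =>
    reflect_mem_Icc (by omega) (by omega)
  refine ⟨by simp only [comp_apply, hx', h.1, hxN], fun v hv hvx => ?_, fun v hv => ?_⟩
  · have hσv := hσmem v hv
    have hne : _root_.reflect N v ≠ x := fun e => hvx (by rw [← hσ v, e, hxN])
    obtain ⟨hmem, hpar⟩ := h.2.1 _ hσv hne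
    refine ⟨reflect_mem_Icc ha hb hmem, fun e => hpar ?_⟩
    exact (hσ _).symm.trans (congrArg (_root_.reflect N) e)
  · obtain ⟨m, hm⟩ := h.2.2 _ (hσmem v hv)
    have hconj := hsemi.iterate_right m (_root_.reflect N v)
    rw [hσ v] at hconj
    exact ⟨m, by rw [← hconj, hm, hxN]⟩

end IsSinkTreeOn

section Weights

variable {W : ℕ → ℕ → ℕ} {a b x : ℕ} {par : ℕ → ℕ}

theorem treeWeight_update_le {v t : ℕ} (hle : W v t ≤ W v (par v)) :
    treeWeight W a b x (update par v t) ≤ treeWeight W a b x par := by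
  refine sum_le_sum fun u _ => ?_
  by_cases huv : u = v
  · subst huv; rwa [update_self]
  · rw [update_of_ne huv]

theorem treeWeight_reflect {N a' b' x' : ℕ} (ha : a' + b = N) (hb : b' + a = N)
    (hx : x' + x = N) :
    treeWeight W a' b' x' (reflect N ∘ par ∘ reflect N)
      = treeWeight (fun u v => W (reflect N u) (reflect N v)) a b x par := by
  have hσ := reflect_involutive N
  have hxN : reflect N x = x' := by rw [reflect_of_le (by omega)]; omega
  have hmem : ∀ {a b x a' b' x' : ℕ}, a' + b = N → b' + a = N → reflect N x = x' →
      ∀ u ∈ (Icc a b).erase x, reflect N u ∈ (Icc a' b').erase x' := by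
    intro a b x a' b' x' ha hb hxN u hu
    rw [mem_erase] at hu ⊢
    exact ⟨fun e => hu.1 (hσ.injective (e.trans hxN.symm)), reflect_mem_Icc ha hb hu.2⟩
  refine (sum_nbij' (reflect N) (reflect N) (hmem ha hb hxN)
    (hmem (by omega) (by omega) (by rw [← hxN, hσ])) (fun u _ => hσ u) (fun u _ => hσ u)
    fun u _ => by rw [comp_apply, comp_apply, hσ u]).symm

theorem treeWeights_reflect {N a' b' x' : ℕ} (ha : a' + b = N) (hb : b' + a = N)
    (hx : x' + x = N) :
    treeWeights W a' b' x' = treeWeights (fun u v => W (reflect N u) (reflect N v)) a b x := by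
  have hσ := reflect_involutive N
  ext w
  constructor
  · rintro ⟨par', h', rfl⟩
    refine ⟨_, h'.reflect (N := N) (by omega) (by omega) (by omega), ?_⟩
    rw [← treeWeight_reflect (N := N) (a' := a') (b' := b') (x' := x') (by omega) (by omega)
      (by omega)]
    congr
    funext v
    simp only [comp_apply, hσ _]
  · rintro ⟨par, h, rfl⟩
    exact ⟨_, h.reflect ha hb hx, (treeWeight_reflect ha hb hx).symm⟩

theorem sum_erase_Icc_eq_add_add {M : Type*} [AddCommMonoid M] {i k j : ℕ} (hik : i ≤ k)
    (hkj : k < j) (F : ℕ → M) :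
    ∑ v ∈ (Icc i j).erase i, F v
      = ∑ v ∈ (Icc i k).erase i, F v + F j + ∑ v ∈ (Icc (k + 1) j).erase j, F v := by
  have hsplit : (Icc i j).erase i
      = (Icc i k).erase i ∪ insert j ((Icc (k + 1) j).erase j) := by
    ext v
    simp only [mem_erase, mem_Icc, mem_union, mem_insert]
    omega
  have hdisj : Disjoint ((Icc i k).erase i) (insert j ((Icc (k + 1) j).erase j)) := by
    rw [disjoint_left]
    intro v hv hv'
    simp only [mem_erase, mem_Icc, mem_insert] at hv hv'
    omega
  rw [hsplit, sum_union hdisj, sum_insert (notMem_erase j _), add_assoc]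

end Weights

section LeftRooted

variable {W : ℕ → ℕ → ℕ} {i j k : ℕ} {par : ℕ → ℕ}

theorem add_mem_treeWeights_left {w₁ w₂ : ℕ} (hik : i ≤ k) (hkj : k < j)
    (h₁ : w₁ ∈ treeWeights W i k i) (h₂ : w₂ ∈ treeWeights W (k + 1) j j) :
    w₁ + W j k + w₂ ∈ treeWeights W i j i := by
  obtain ⟨par₁, t₁, rfl⟩ := h₁
  obtain ⟨par₂, t₂, rfl⟩ := h₂
  set q := update (fun v => if v ≤ k then par₁ v else par₂ v) j k with hq
  have hqj : q j = k := update_self ..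
  have hq₁ : ∀ v, v ≤ k → q v = par₁ v := fun v hv => by
    rw [hq, update_of_ne (by omega), if_pos hv]
  have hq₂ : ∀ v, k < v → v ≠ j → q v = par₂ v := fun v hv hvj => by
    rw [hq, update_of_ne hvj, if_neg (by omega)]
  have hreach₁ : ∀ v ∈ Icc i k, ∃ m, q^[m] v = i := fun v hv =>
    t₁.reaches_of_agree (fun u hu _ => Or.inl (hq₁ u (mem_Icc.1 hu).2)) ⟨0, rfl⟩ hv
  have hreachj : ∃ m, q^[m] j = i := by
    obtain ⟨m, hm⟩ := hreach₁ k (mem_Icc.2 ⟨hik, le_rfl⟩)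
    exact ⟨m + 1, by rw [iterate_succ_apply, hqj, hm]⟩
  refine ⟨q, ⟨by rw [hq₁ i hik, t₁.1], fun v hv hvi => ?_, fun v hv => ?_⟩, ?_⟩
  · rw [mem_Icc] at hv
    by_cases hvk : v ≤ k
    · have := t₁.2.1 v (mem_Icc.2 ⟨hv.1, hvk⟩) hvi
      rw [mem_Icc] at this ⊢
      rw [hq₁ v hvk]
      exact ⟨⟨this.1.1, by omega⟩, this.2⟩
    by_cases hvj : v = j
    · subst hvj
      rw [hqj, mem_Icc]
      exact ⟨⟨hik, hkj.le⟩, by omega⟩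
    · have := t₂.2.1 v (mem_Icc.2 ⟨by omega, hv.2⟩) hvj
      rw [mem_Icc] at this ⊢
      rw [hq₂ v (by omega) hvj]
      exact ⟨⟨by omega, this.1.2⟩, this.2⟩
  · by_cases hvk : v ≤ k
    · exact hreach₁ v (mem_Icc.2 ⟨(mem_Icc.1 hv).1, hvk⟩)
    · refine t₂.reaches_of_agree (fun u hu huj => Or.inl (hq₂ u ?_ huj)) hreachj
        (mem_Icc.2 ⟨by omega, (mem_Icc.1 hv).2⟩)
      have := (mem_Icc.1 hu).1
      omega
  · simp only [treeWeight]
    rw [sum_erase_Icc_eq_add_add hik hkj, hqj]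
    refine congrArg₂ (· + W j k + ·) (sum_congr rfl fun v hv => ?_) (sum_congr rfl fun v hv => ?_)
    · rw [hq₁ v (mem_Icc.1 (mem_of_mem_erase hv)).2]
    · rw [mem_erase, mem_Icc] at hv
      rw [hq₂ v (by omega) hv.1]

end LeftRooted

namespace IsSinkTreeOn

variable {W : ℕ → ℕ → ℕ} {i j k : ℕ} {par : ℕ → ℕ}

theorem iterate_succ_ne_of_ne_root (h : IsSinkTreeOn i j i par) {v : ℕ} (hv : v ∈ Icc i j)
    (hvi : v ≠ i) (m : ℕ) : par^[m + 1] v ≠ v := fun e =>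
  h.notMem_periodicPts hv hvi (mk_mem_periodicPts m.succ_pos e)

theorem exists_reroute (hW : BetweenMonotoneOn W i j) (h : IsSinkTreeOn i j i par)
    (hij : i < j) {w : ℕ} (hkw : par j < w) (hwj : w < j) (hw : par w ≤ par j) :
    ∃ q, IsSinkTreeOn i j i q ∧ treeWeight W i j i q ≤ treeWeight W i j i par ∧ q j = w := by
  have hjmem : j ∈ Icc i j := right_mem_Icc.2 hij.le
  obtain ⟨hkmem, -⟩ := h.2.1 j hjmem hij.ne'
  have hwmem : w ∈ Icc i j := mem_Icc.2 ⟨by have := (mem_Icc.1 hkmem).1; omega, hwj.le⟩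
  have haper := h.iterate_succ_ne_of_ne_root hjmem hij.ne'
  have hjw : W j w ≤ W j (par j) := hW j hjmem _ hkmem w (Or.inr ⟨hkw.le, hwj.le⟩)
  by_cases hreach : ∃ m, par^[m] w = j
  · -- Rehanging `j` on its descendant `w` would close a cycle, so first hang `w` on `par j`.
    obtain ⟨m₀, hm₀⟩ := hreach
    have hkw' : ∀ m, par^[m] (par j) ≠ w := fun m e =>
      haper (m₀ + m) (by rw [iterate_succ_apply, iterate_add_apply, e, hm₀])
    have t₁ := h.update hwmem (by have := (mem_Icc.1 hkmem).1; omega) hkmem hkw'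
    have hwj' : ∀ m, (Function.update par w (par j))^[m] w ≠ j := by
      rintro (_ | m) e
      · exact hwj.ne e
      · rw [iterate_succ_apply, update_self, iterate_update_apply_of_forall_ne hkw'] at e
        exact haper m (by rwa [iterate_succ_apply])
    refine ⟨_, t₁.update hjmem hij.ne' hwmem hwj', ?_, update_self ..⟩
    calc treeWeight W i j i (Function.update (Function.update par w (par j)) j w)
        ≤ treeWeight W i j i (Function.update par w (par j)) :=
          treeWeight_update_le (by rwa [update_of_ne hwj.ne'])
      _ ≤ treeWeight W i j i par := treeWeight_update_le <|
          hW w hwmem _ (h.mapsTo (left_mem_Icc.2 hij.le) hwmem) _ (Or.inr ⟨hw, hkw.le⟩)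
  · push Not at hreach
    exact ⟨_, h.update hjmem hij.ne' hwmem hreach, treeWeight_update_le hjw, update_self ..⟩

theorem exists_normal (hW : BetweenMonotoneOn W i j) (h : IsSinkTreeOn i j i par)
    (hij : i < j) :
    ∃ q, IsSinkTreeOn i j i q ∧ treeWeight W i j i q ≤ treeWeight W i j i par ∧
      ∀ w, q j < w → w < j → q j < q w := by
  induction hd : j - par j using Nat.strong_induction_on generalizing par with
  | _ d ih =>
    by_cases hnorm : ∀ w, par j < w → w < j → par j < par w
    · exact ⟨par, h, le_rfl, hnorm⟩
    push Not at hnorm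
    obtain ⟨w, hkw, hwj, hw⟩ := hnorm
    obtain ⟨q, hq, hqw, hqj⟩ := h.exists_reroute hW hij hkw hwj hw
    obtain ⟨q', hq', hq'w, hnorm'⟩ := ih (j - q j) (by omega) hq rfl
    exact ⟨q', hq', hq'w.trans hqw, hnorm'⟩

theorem exists_iterate_eq_right (h : IsSinkTreeOn i j i par) (hik : i ≤ k)
    (hclosed : ∀ u, k < u → u < j → k < par u) {v : ℕ} (hv : v ∈ Ioc k j) :
    ∃ s, par^[s] v = j := by
  rw [mem_Ioc] at hv
  obtain ⟨M, hM⟩ := h.2.2 v (mem_Icc.2 ⟨by omega, hv.2⟩)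
  refine exists_iterate_eq_of_mapsTo_off (S := (Ioc k j : Set ℕ)) (fun u hu huj => ?_)
    (mem_Ioc.2 hv) (m := M) (by rw [hM]; simp only [coe_Ioc, Set.mem_Ioc]; omega)
  rw [mem_coe, mem_Ioc] at hu ⊢
  exact ⟨hclosed u hu.1 (lt_of_le_of_ne hu.2 huj),
    (mem_Icc.1 (h.2.1 u (mem_Icc.2 ⟨by omega, hu.2⟩) (by omega)).1).2⟩

theorem iterate_apply_right_le (h : IsSinkTreeOn i j i par) (hij : i < j)
    (hnorm : ∀ w, par j < w → w < j → par j < par w) (r : ℕ) : par^[r] (par j) ≤ par j := by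
  have hjmem : j ∈ Icc i j := right_mem_Icc.2 hij.le
  have hkmem := (h.2.1 j hjmem hij.ne').1
  -- Entering `(par j, j]` would lead back to `j` and close a cycle through `j`.
  by_contra! hr
  have hmem : par^[r] (par j) ∈ Ioc (par j) j :=
    mem_Ioc.2 ⟨hr, (mem_Icc.1 ((h.mapsTo (left_mem_Icc.2 hij.le)).iterate r hkmem)).2⟩
  obtain ⟨s, hs⟩ := h.exists_iterate_eq_right (mem_Icc.1 hkmem).1 hnorm hmem
  exact h.iterate_succ_ne_of_ne_root hjmem hij.ne' (s + r)
    (by rw [iterate_succ_apply, iterate_add_apply, hs])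

theorem min_of_iterate_le (h : IsSinkTreeOn i j i par) (hk : k ∈ Icc i j)
    (hbelow : ∀ r, par^[r] k ≤ k) : IsSinkTreeOn i k i (fun v => min (par v) k) := by
  rw [mem_Icc] at hk
  have hmaps := h.mapsTo (left_mem_Icc.2 (hk.1.trans hk.2))
  have horbit : ∀ r, min (par (par^[r] k)) k = par (par^[r] k) := fun r =>
    min_eq_left (by rw [← iterate_succ_apply' par]; exact hbelow (r + 1))
  have hreachk : ∃ m, (fun v => min (par v) k)^[m] k = i := by
    obtain ⟨M, hM⟩ := h.2.2 k (mem_Icc.2 hk)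
    exact ⟨M, by rw [iterate_apply_eq_of_eq_on_orbit horbit, hM]⟩
  refine ⟨by simp only [h.1, hk.1, min_eq_left], fun v hv hvi => ?_, fun v hv => ?_⟩
  · rw [mem_Icc] at hv ⊢
    have hpar := h.2.1 v (mem_Icc.2 ⟨hv.1, hv.2.trans hk.2⟩) hvi
    rw [mem_Icc] at hpar
    have hparkk : par k ≤ k := hbelow 1
    refine ⟨⟨le_min hpar.1.1 hk.1, min_le_right _ _⟩, fun e => ?_⟩
    simp only at e
    rcases eq_or_ne v k with rfl | hvk <;> omega
  · obtain ⟨M, hM⟩ := h.2.2 v (mem_Icc.2 ⟨(mem_Icc.1 hv).1, (mem_Icc.1 hv).2.trans hk.2⟩)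
    refine holds_of_holds_iterate (S := (Icc i k : Set ℕ))
      (P := fun u => ∃ m, (fun v => min (par v) k)^[m] u = i) (fun u hu hP => ?_) M hv
      ⟨0, hM⟩
    rw [mem_coe, mem_Icc] at hu
    by_cases hparu : par u ≤ k
    · refine ⟨mem_Icc.2 ⟨(mem_Icc.1 (hmaps (mem_Icc.2 ⟨hu.1, hu.2.trans hk.2⟩))).1, hparu⟩,
        fun ⟨m, hm⟩ => ⟨m + 1, ?_⟩⟩
      rwa [iterate_succ_apply, min_eq_left hparu]
    · obtain ⟨m, hm⟩ := hreachk
      exact absurd ⟨m + 1, by rw [iterate_succ_apply, min_eq_right (by omega), hm]⟩ hP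

theorem update_self_of_lt_apply (h : IsSinkTreeOn i j i par) (hik : i ≤ k)
    (hclosed : ∀ u, k < u → u < j → k < par u) :
    IsSinkTreeOn (k + 1) j j (Function.update par j j) := by
  refine ⟨update_self .., fun v hv hvj => ?_, fun v hv => ?_⟩
  · rw [mem_Icc] at hv ⊢
    rw [update_of_ne hvj]
    have hpar := h.2.1 v (mem_Icc.2 ⟨by omega, hv.2⟩) (by omega)
    rw [mem_Icc] at hpar
    exact ⟨⟨hclosed v (by omega) (by omega), hpar.1.2⟩, hpar.2⟩
  · have hv' : v ∈ Ioc k j := by rw [mem_Icc] at hv; rw [mem_Ioc]; omega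
    obtain ⟨s, hs⟩ := h.exists_iterate_eq_right hik hclosed hv'
    refine holds_of_holds_iterate (S := (Ioc k j : Set ℕ))
      (P := fun u => ∃ m, (Function.update par j j)^[m] u = j) (fun u hu hP => ?_) s hv'
      ⟨0, hs⟩
    have huj : u ≠ j := fun e => hP ⟨0, e⟩
    rw [mem_coe, mem_Ioc] at hu
    have hpar := h.2.1 u (mem_Icc.2 ⟨by omega, hu.2⟩) (by omega)
    refine ⟨mem_Ioc.2 ⟨hclosed u hu.1 (by omega), (mem_Icc.1 hpar.1).2⟩,
      fun ⟨m, hm⟩ => ⟨m + 1, ?_⟩⟩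
    rwa [iterate_succ_apply, update_of_ne huj]

end IsSinkTreeOn

section Split

variable {W : ℕ → ℕ → ℕ} {i j w : ℕ}

theorem exists_split_le_of_mem_treeWeights_left (hW : BetweenMonotoneOn W i j) (hij : i < j)
    (hw : w ∈ treeWeights W i j i) :
    ∃ k ∈ Ico i j, ∃ w₁ ∈ treeWeights W i k i, ∃ w₂ ∈ treeWeights W (k + 1) j j,
      w₁ + W j k + w₂ ≤ w := by
  obtain ⟨par, h, rfl⟩ := hw
  obtain ⟨q, hq, hqw, hnorm⟩ := h.exists_normal hW hij
  obtain ⟨hkmem, hkj⟩ := hq.2.1 j (right_mem_Icc.2 hij.le) hij.ne'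
  have hik : i ≤ q j := (mem_Icc.1 hkmem).1
  have hkj' : q j < j := lt_of_le_of_ne (mem_Icc.1 hkmem).2 hkj
  refine ⟨q j, mem_Ico.2 ⟨hik, hkj'⟩,
    _, ⟨_, hq.min_of_iterate_le hkmem (hq.iterate_apply_right_le hij hnorm), rfl⟩,
    _, ⟨_, hq.update_self_of_lt_apply hik hnorm, rfl⟩, ?_⟩
  calc _ ≤ ∑ v ∈ (Icc i (q j)).erase i, W v (q v) + W j (q j)
          + ∑ v ∈ (Icc (q j + 1) j).erase j, W v (q v) := by
        gcongr ?_ + _ + ?_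
        · refine sum_le_sum fun v hv => ?_
          rw [mem_erase, mem_Icc] at hv
          dsimp only
          rcases le_total (q v) (q j) with hle | hle
          · rw [min_eq_left hle]
          · rw [min_eq_right hle]
            exact hW v (mem_Icc.2 ⟨hv.2.1, by omega⟩) _
              (hq.mapsTo (left_mem_Icc.2 hij.le) (mem_Icc.2 ⟨hv.2.1, by omega⟩)) _
              (Or.inl ⟨hv.2.2, hle⟩)
        · exact (sum_congr rfl fun v hv => by rw [update_of_ne (ne_of_mem_erase hv)]).le
    _ = treeWeight W i j i q := (sum_erase_Icc_eq_add_add hik hkj' _).symm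
    _ ≤ _ := hqw

theorem add_mem_treeWeights_right {c w₁ w₂ : ℕ} (hic : i < c) (hcj : c ≤ j)
    (h₁ : w₁ ∈ treeWeights W i (c - 1) i) (h₂ : w₂ ∈ treeWeights W c j j) :
    w₁ + W i c + w₂ ∈ treeWeights W i j j := by
  rw [treeWeights_reflect (N := i + j) (a := i) (b := j) (x := i) (by omega) (by omega)
    (by omega)]
  rw [treeWeights_reflect (N := i + j) (a := i + j - c + 1) (b := j) (x := j) (by omega)
    (by omega) (by omega)] at h₁
  rw [treeWeights_reflect (N := i + j) (a := i) (b := i + j - c) (x := i) (by omega)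
    (by omega) (by omega)] at h₂
  have hc : W (reflect (i + j) j) (reflect (i + j) (i + j - c)) = W i c := by
    rw [reflect_of_le (by omega), reflect_of_le (by omega)]
    congr 1 <;> omega
  have := add_mem_treeWeights_left (by omega) (by omega) h₂ h₁
  rw [hc] at this
  convert this using 1
  omega

theorem exists_split_le_of_mem_treeWeights_right (hW : BetweenMonotoneOn W i j) (hij : i < j)
    (hw : w ∈ treeWeights W i j j) :
    ∃ c ∈ Ioc i j, ∃ w₁ ∈ treeWeights W i (c - 1) i, ∃ w₂ ∈ treeWeights W c j j,
      w₁ + W i c + w₂ ≤ w := by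
  rw [treeWeights_reflect (N := i + j) (a := i) (b := j) (x := i) (by omega) (by omega)
    (by omega)] at hw
  obtain ⟨k, hk, w₁, h₁, w₂, h₂, hle⟩ := exists_split_le_of_mem_treeWeights_left
    (hW.reflect (N := i + j) (by omega) (by omega)) hij hw
  rw [mem_Ico] at hk
  refine ⟨i + j - k, mem_Ioc.2 ⟨by omega, by omega⟩, w₂, ?_, w₁, ?_, ?_⟩
  · rwa [treeWeights_reflect (N := i + j) (a := k + 1) (b := j) (x := j) (by omega)
      (by omega) (by omega)]
  · rwa [treeWeights_reflect (N := i + j) (a := i) (b := k) (x := i) (by omega)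
      (by omega) (by omega)]
  · rw [reflect_of_le (by omega), reflect_of_le (by omega), Nat.add_sub_cancel] at hle
    omega

end Split

theorem isLeast_inf'_of_split {ι M : Type*} [AddCommMonoid M] [LinearOrder M]
    [IsOrderedAddMonoid M] {s : Finset ι} (hs : s.Nonempty) {T : Set M} {A B : ι → Set M}
    {α β c : ι → M} (hA : ∀ k ∈ s, IsLeast (A k) (α k)) (hB : ∀ k ∈ s, IsLeast (B k) (β k))
    (hglue : ∀ k ∈ s, ∀ a ∈ A k, ∀ b ∈ B k, a + c k + b ∈ T)
    (hsplit : ∀ t ∈ T, ∃ k ∈ s, ∃ a ∈ A k, ∃ b ∈ B k, a + c k + b ≤ t) :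
    IsLeast T (s.inf' hs fun k => α k + c k + β k) := by
  obtain ⟨k, hk, heq⟩ := exists_mem_eq_inf' hs fun k => α k + c k + β k
  refine ⟨heq ▸ hglue k hk _ (hA k hk).1 _ (hB k hk).1, fun t ht => ?_⟩
  obtain ⟨k, hk, a, ha, b, hb, hle⟩ := hsplit t ht
  calc s.inf' hs (fun k => α k + c k + β k) ≤ α k + c k + β k := inf'_le _ hk
    _ ≤ a + c k + b := add_le_add (add_le_add_left ((hA k hk).2 ha) _) ((hB k hk).2 hb)
    _ ≤ t := hle

theorem isLeast_treeWeights_self (W : ℕ → ℕ → ℕ) (i : ℕ) : IsLeast (treeWeights W i i i) 0 := by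
  refine ⟨⟨id, ⟨rfl, fun k hk hki => ?_, fun k hk => ⟨0, ?_⟩⟩, ?_⟩, fun _ _ => Nat.zero_le _⟩
  · exact absurd (by simpa using hk) hki
  · simpa using hk
  · simp [treeWeight]

theorem isLeast_treeWeights_of_recurrence {W : ℕ → ℕ → ℕ}
    (hW : ∀ i j, BetweenMonotoneOn W i j) {Sl Sr : ℕ → ℕ → ℕ}
    (hSl0 : ∀ i, Sl i i = 0) (hSr0 : ∀ i, Sr i i = 0)
    (hSl : ∀ i j : ℕ, (hij : i < j) → Sl i j
      = (Ico i j).inf' (nonempty_Ico.mpr hij) (fun k => Sl i k + W j k + Sr (k + 1) j))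
    (hSr : ∀ i j : ℕ, (hij : i < j) → Sr i j
      = (Ioc i j).inf' (nonempty_Ioc.mpr hij) (fun k => Sl i (k - 1) + W i k + Sr k j))
    {i j : ℕ} (hij : i ≤ j) :
    IsLeast (treeWeights W i j i) (Sl i j) ∧ IsLeast (treeWeights W i j j) (Sr i j) := by
  induction hd : j - i using Nat.strong_induction_on generalizing i j with
  | _ d ih =>
    rcases hij.eq_or_lt with rfl | hlt
    · rw [hSl0, hSr0]
      exact ⟨isLeast_treeWeights_self W i, isLeast_treeWeights_self W i⟩
    have ih' : ∀ {i' j'}, i' ≤ j' → j' - i' < j - i →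
        IsLeast (treeWeights W i' j' i') (Sl i' j') ∧ IsLeast (treeWeights W i' j' j') (Sr i' j') :=
      fun hij' hlt' => ih _ (hd ▸ hlt') hij' rfl
    constructor
    · rw [hSl i j hlt]
      exact isLeast_inf'_of_split _
        (fun k hk => (ih' (mem_Ico.1 hk).1 (by have := mem_Ico.1 hk; omega)).1)
        (fun k hk => (ih' (mem_Ico.1 hk).2 (by have := mem_Ico.1 hk; omega)).2)
        (fun k hk _ ha _ hb => add_mem_treeWeights_left (mem_Ico.1 hk).1 (mem_Ico.1 hk).2 ha hb)
        (fun _ ht => exists_split_le_of_mem_treeWeights_left (hW i j) hlt ht)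
    · rw [hSr i j hlt]
      exact isLeast_inf'_of_split _
        (fun k hk => (ih' (by have := mem_Ioc.1 hk; omega) (by have := mem_Ioc.1 hk; omega)).1)
        (fun k hk => (ih' (mem_Ioc.1 hk).2 (by have := mem_Ioc.1 hk; omega)).2)
        (fun k hk _ ha _ hb => add_mem_treeWeights_right (mem_Ioc.1 hk).1 (mem_Ioc.1 hk).2 ha hb)
        (fun _ ht => exists_split_le_of_mem_treeWeights_right (hW i j) hlt ht)

theorem dp_sound_general (n : ℕ) (p : ℕ → ℝ) (hp : StrictMono p)
    (Sl Sr : ℕ → ℕ → ℕ)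
    (hSl0 : ∀ i, Sl i i = 0) (hSr0 : ∀ i, Sr i i = 0)
    (hSl : ∀ i j : ℕ, (hij : i < j) → Sl i j
      = (Finset.Ico i j).inf' (Finset.nonempty_Ico.mpr hij)
          (fun k => Sl i k + lineWeight p 1 n j k + Sr (k + 1) j))
    (hSr : ∀ i j : ℕ, (hij : i < j) → Sr i j
      = (Finset.Ioc i j).inf' (Finset.nonempty_Ioc.mpr hij)
          (fun k => Sl i (k - 1) + lineWeight p 1 n i k + Sr k j))
    (i j : ℕ) (hij : i ≤ j) :
    Sl i j ≤ OPTsink p 1 n i j i ∧ Sr i j ≤ OPTsink p 1 n i j j ∧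
    (∃ par : ℕ → ℕ, IsSinkTreeOn i j i par ∧ sinkTreeWeight p 1 n i j i par = Sl i j) ∧
    (∃ par : ℕ → ℕ, IsSinkTreeOn i j j par ∧ sinkTreeWeight p 1 n i j j par = Sr i j) := by
  obtain ⟨hl, hr⟩ := isLeast_treeWeights_of_recurrence
    (fun _ _ => lineWeight_betweenMonotoneOn hp.monotone 1 n _ _) hSl0 hSr0 hSl hSr hij
  obtain ⟨parl, hparl, hwl⟩ := hl.1
  obtain ⟨parr, hparr, hwr⟩ := hr.1
  exact ⟨hl.csInf_eq.ge, hr.csInf_eq.ge, ⟨parl, hparl, hwl.symm⟩, ⟨parr, hparr, hwr.symm⟩⟩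

/-- soundness of the sink-tree dynamic program. If `Sl`/`Sr` satisfy the
recurrences of Algorithm 1 (with all weights computed over the full point set
`P = P_{[1,n]}`), then `Sl i j ≤ OPT^i_{[i,j]}` and `Sr i j ≤ OPT^j_{[i,j]}`, and each
value is achieved as the weight of an actual sink tree on `P_{[i,j]}` rooted at `p_i`
(resp. `p_j`). -/
theorem dp_sound (n : ℕ) (p : ℕ → ℝ) (hp : StrictMono p)
    (Sl Sr : ℕ → ℕ → ℕ)
    (hSl0 : ∀ i, Sl i i = 0) (hSr0 : ∀ i, Sr i i = 0)
    (hSl : ∀ i j : ℕ, (hij : i < j) → Sl i j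
      = (Finset.Ico i j).inf' (Finset.nonempty_Ico.mpr hij)
          (fun k => Sl i k + lineWeight p 1 n j k + Sr (k + 1) j))
    (hSr : ∀ i j : ℕ, (hij : i < j) → Sr i j
      = (Finset.Ioc i j).inf' (Finset.nonempty_Ioc.mpr hij)
          (fun k => Sl i (k - 1) + lineWeight p 1 n i k + Sr k j))
    (i j : ℕ) (h1i : 1 ≤ i) (hij : i ≤ j) (hjn : j ≤ n) :
    Sl i j ≤ OPTsink p 1 n i j i ∧ Sr i j ≤ OPTsink p 1 n i j j ∧
    (∃ par : ℕ → ℕ, IsSinkTreeOn i j i par ∧ sinkTreeWeight p 1 n i j i par = Sl i j) ∧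
    (∃ par : ℕ → ℕ, IsSinkTreeOn i j j par ∧ sinkTreeWeight p 1 n i j j par = Sr i j) :=
  dp_sound_general n p hp Sl Sr hSl0 hSr0 hSl hSr i j hij
end
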